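/- For the convergents Conv_h(q,z) = P_h(q,z)/Q_h(q,z) of the square series J-fraction, the difference of consecutive convergents satisfies Conv_h(q,z) - Conv_{h-1}(q,z) = (-1)^{h-1}·q^{(3h-4)(h-1)}·(q²;q²)_{h-1}·z^{2h-2} / (Q_{h-1}(q,z)·Q_h(q,z)) for all h ≥ 2. -/

import Mathlib

/-- The q-Pochhammer symbol `(a; q)_n = ∏_{j=0}^{n-1} (1 - a q^j)`. -/
noncomputable def qPoch {K : Type*} [Field K] (q a : K) (n : ℕ) : K :=
  ∏ j ∈ Finset.range n, (1 - a * q ^ j)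

/-- The numerator convergents `P_h(q, z)` of the square series J-fraction. -/
noncomputable def Pconv {K : Type*} [Field K] (q z : K) : ℕ → K
  | 0 => 0
  | 1 => 1
  | (h + 2) =>
      (1 - q ^ (2 * (h + 2) - 3) * (q ^ (2 * (h + 2)) + q ^ (2 * (h + 2) - 2) - 1) * z) *
          Pconv q z (h + 1)
        - q ^ (6 * (h + 2) - 10) * (q ^ (2 * (h + 2) - 2) - 1) * z ^ 2 * Pconv q z h

/-- The denominator convergents `Q_h(q, z)` of the square series J-fraction. -/
noncomputable def Qconv {K : Type*} [Field K] (q z : K) : ℕ → K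
  | 0 => 1
  | 1 => 1 - q * z
  | (h + 2) =>
      (1 - q ^ (2 * (h + 2) - 3) * (q ^ (2 * (h + 2)) + q ^ (2 * (h + 2) - 2) - 1) * z) *
          Qconv q z (h + 1)
        - q ^ (6 * (h + 2) - 10) * (q ^ (2 * (h + 2) - 2) - 1) * z ^ 2 * Qconv q z h

/-!
`P` and `Q` solve the same three-term recurrence `X_{h+2} = b_h X_{h+1} - a_h X_h`, so the
Casoratian `P_{h+1} Q_h - P_h Q_{h+1}` gets multiplied by `a_h` at each step and equals
`∏_{i<h} a_i` times its initial value `1`. Here `-a_i = q^{6i+2} (1 - q^{2i+2}) z²`, and the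
exponents add up to `∑_{i<h} (6i+2) = (3h-1)h`. Dividing by `Q_h Q_{h+1}` gives the theorem.
-/

theorem casoratian_eq_prod_mul {R : Type*} [CommRing R] (a b P Q : ℕ → R)
    (hP : ∀ n, P (n + 2) = b n * P (n + 1) - a n * P n)
    (hQ : ∀ n, Q (n + 2) = b n * Q (n + 1) - a n * Q n) (n : ℕ) :
    P (n + 1) * Q n - P n * Q (n + 1) = (∏ i ∈ Finset.range n, a i) * (P 1 * Q 0 - P 0 * Q 1) := by
  induction n with
  | zero => simp
  | succ n ih =>
    rw [hP, hQ, Finset.prod_range_succ]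
    linear_combination a n * ih

section SquareSeries

variable {K : Type*} [Field K] (q z : K)

theorem Pconv_add_two (n : ℕ) :
    Pconv q z (n + 2) = (1 - q ^ (2 * n + 1) * (q ^ (2 * n + 4) + q ^ (2 * n + 2) - 1) * z) *
        Pconv q z (n + 1) + q ^ (6 * n + 2) * (1 - q ^ 2 * (q ^ 2) ^ n) * z ^ 2 * Pconv q z n := by
  rw [Pconv, show 2 * (n + 2) - 3 = 2 * n + 1 by omega, show 2 * (n + 2) - 2 = 2 * n + 2 by omega,
    show 6 * (n + 2) - 10 = 6 * n + 2 by omega]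
  ring

theorem Qconv_add_two (n : ℕ) :
    Qconv q z (n + 2) = (1 - q ^ (2 * n + 1) * (q ^ (2 * n + 4) + q ^ (2 * n + 2) - 1) * z) *
        Qconv q z (n + 1) + q ^ (6 * n + 2) * (1 - q ^ 2 * (q ^ 2) ^ n) * z ^ 2 * Qconv q z n := by
  rw [Qconv, show 2 * (n + 2) - 3 = 2 * n + 1 by omega, show 2 * (n + 2) - 2 = 2 * n + 2 by omega,
    show 6 * (n + 2) - 10 = 6 * n + 2 by omega]
  ring

theorem prod_range_neg_coeff_eq_qPoch (m : ℕ) :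
    ∏ i ∈ Finset.range m, -(q ^ (6 * i + 2) * (1 - q ^ 2 * (q ^ 2) ^ i) * z ^ 2) =
      (-1) ^ m * q ^ ((3 * (m + 1) - 4) * m) * qPoch (q ^ 2) (q ^ 2) m * z ^ (2 * m) := by
  have hexp : ∑ i ∈ Finset.range m, (6 * i + 2) = (3 * (m + 1) - 4) * m := by
    rcases m with _ | m
    · rfl
    · have := Finset.sum_range_id_mul_two (m + 1)
      rw [Finset.sum_add_distrib, ← Finset.mul_sum, Finset.sum_const, Finset.card_range]
      simp only [add_tsub_cancel_right, smul_eq_mul] at this ⊢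
      rw [show 3 * (m + 1 + 1) - 4 = 3 * m + 2 by omega]
      linarith
  simp_rw [neg_eq_neg_one_mul (_ * _), Finset.prod_mul_distrib, Finset.prod_const,
    Finset.card_range, Finset.prod_pow_eq_pow_sum, hexp, qPoch, ← pow_mul]
  ring

theorem Pconv_succ_mul_Qconv_sub_eq (m : ℕ) :
    Pconv q z (m + 1) * Qconv q z m - Pconv q z m * Qconv q z (m + 1) =
      (-1) ^ m * q ^ ((3 * (m + 1) - 4) * m) * qPoch (q ^ 2) (q ^ 2) m * z ^ (2 * m) := by
  rw [casoratian_eq_prod_mul (fun i => -(q ^ (6 * i + 2) * (1 - q ^ 2 * (q ^ 2) ^ i) * z ^ 2))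
      (fun i => 1 - q ^ (2 * i + 1) * (q ^ (2 * i + 4) + q ^ (2 * i + 2) - 1) * z) _ _
      (fun n => by rw [Pconv_add_two]; ring) (fun n => by rw [Qconv_add_two]; ring),
    prod_range_neg_coeff_eq_qPoch]
  simp [Pconv, Qconv]

end SquareSeries

theorem stmt9 {K : Type*} [Field K] (q z : K) (h : ℕ) (hh : 2 ≤ h)
    (hQ1 : Qconv q z (h - 1) ≠ 0) (hQ2 : Qconv q z h ≠ 0) :
    Pconv q z h / Qconv q z h - Pconv q z (h - 1) / Qconv q z (h - 1) =
      (-1) ^ (h - 1) * q ^ ((3 * h - 4) * (h - 1)) * qPoch (q ^ 2) (q ^ 2) (h - 1) *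
          z ^ (2 * h - 2) / (Qconv q z (h - 1) * Qconv q z h) := by
  obtain ⟨m, rfl⟩ : ∃ m, h = m + 1 := ⟨h - 1, by omega⟩
  rw [add_tsub_cancel_right] at hQ1 ⊢
  rw [div_sub_div _ _ hQ2 hQ1, mul_comm (Qconv q z (m + 1)) (Qconv q z m),
    show 2 * (m + 1) - 2 = 2 * m by omega, ← Pconv_succ_mul_Qconv_sub_eq]
  ring
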